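/- arXiv:2309.11701 — 4 statements merged into one kernel-verified Lean document; each statement's English description precedes it below -/
import Mathlib

section
/- Let 1 < d ≤ D ≤ 2 be real numbers with D < (3+√5)d/2 - (1+√5)/2. Then d(2D-d-1)/(D²+D-Dd-1) ≥ 1. -/
/-!
Clearing the denominator, the inequality reads `D² - (3d - 1)D + d² + d - 1 ≤ 0`. This quadratic in
`D` has discriminant `5(d - 1)²`, hence roots `(3d - 1 ∓ √5 (d - 1)) / 2`. The smaller root is at
most `d ≤ D` because `d ≥ 1`, and the larger one exceeds `D` precisely by the hypothesis on `2D`.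
-/

open Real

lemma sq_add_sub_mul_sub_one_pos {d D : ℝ} (hd : 1 < d) (hdD : d ≤ D) :
    0 < D ^ 2 + D - D * d - 1 := by
  have hsplit : D ^ 2 + D - D * d - 1 = D * (D - d) + (D - 1) := by ring
  rw [hsplit]
  have : 0 ≤ D * (D - d) := mul_nonneg (by linarith) (by linarith)
  linarith

lemma four_mul_sub_eq_mul_sub_roots (d D : ℝ) :
    4 * (D ^ 2 + D - D * d - 1 - d * (2 * D - d - 1)) =
      (2 * D - (3 * d - 1 - √5 * (d - 1))) * (2 * D - (3 * d - 1 + √5 * (d - 1))) := by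
  linear_combination (d - 1) ^ 2 * Real.sq_sqrt (show (0 : ℝ) ≤ 5 by norm_num)

lemma smaller_root_le_two_mul {d D : ℝ} (hd : 1 < d) (hdD : d ≤ D) :
    3 * d - 1 - √5 * (d - 1) ≤ 2 * D := by
  have hsqrt : 1 ≤ √5 := Real.one_le_sqrt.mpr (by norm_num)
  nlinarith

theorem stmt_1_general (d D : ℝ) (hd : 1 < d) (hdD : d ≤ D)
    (hsemi : 2 * D < (3 + Real.sqrt 5) * d - 1 - Real.sqrt 5) :
    0 < D ^ 2 + D - D * d - 1 ∧
      d * (2 * D - d - 1) / (D ^ 2 + D - D * d - 1) ≥ 1 := by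
  have hden := sq_add_sub_mul_sub_one_pos hd hdD
  refine ⟨hden, ?_⟩
  rw [ge_iff_le, le_div_iff₀ hden]
  have hprod : (2 * D - (3 * d - 1 - √5 * (d - 1))) * (2 * D - (3 * d - 1 + √5 * (d - 1))) ≤ 0 :=
    mul_nonpos_of_nonneg_of_nonpos (sub_nonneg.mpr (smaller_root_le_two_mul hd hdD))
      (by linarith)
  linarith [four_mul_sub_eq_mul_sub_roots d D]

theorem stmt_1 (d D : ℝ) (hd : 1 < d) (hdD : d ≤ D) (hD : D ≤ 2)
    (hsemi : 2 * D < (3 + Real.sqrt 5) * d - 1 - Real.sqrt 5) :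
    0 < D ^ 2 + D - D * d - 1 ∧
      d * (2 * D - d - 1) / (D ^ 2 + D - D * d - 1) ≥ 1 :=
  stmt_1_general d D hd hdD hsemi
end

section
/- Let 1 < d ≤ D ≤ 2 with m := d(2D-d-1)/(D²+D-Dd-1) < 1, and let r > 0. The function L ↦ max{L + m(r-L), dr - L} on [0, r] attains its minimum value d·r·(1 - (D-1)(D-d)/(2D² + (2-4d)D + d² + d - 2)) at the point L where the two expressions are equal. -/
/-! The first expression is increasing and the second decreasing in `L`, so the maximum of the
two is smallest where they cross, at `L = r (d - m) / (2 - m)`. The closed form of the common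
value comes from `m (D² + D - D d - 1) = d (2D - d - 1)`, which turns the denominator
`2D² + (2 - 4d) D + d² + d - 2` into `(D² + D - D d - 1)(2 - m)`. -/

theorem isLeast_image_max_of_monotoneOn_of_antitoneOn {α β : Type*} [LinearOrder α]
    [LinearOrder β] {f g : α → β} {s : Set α} (hf : MonotoneOn f s) (hg : AntitoneOn g s)
    {a : α} (ha : a ∈ s) (hfg : f a = g a) :
    IsLeast ((fun x => max (f x) (g x)) '' s) (f a) := by
  refine ⟨⟨a, ha, by simp only [hfg, max_self]⟩, ?_⟩
  rintro _ ⟨x, hx, rfl⟩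
  rcases le_total x a with hxa | hax
  · exact (hfg ▸ hg hx ha hxa).trans (le_max_right _ _)
  · exact (hf ha hx hax).trans (le_max_left _ _)

theorem monotone_add_mul_sub {m : ℝ} (hm : m ≤ 1) (r : ℝ) :
    Monotone fun L : ℝ => L + m * (r - L) := fun x y hxy => by
  linarith [mul_le_mul_of_nonneg_left hxy (sub_nonneg.2 hm)]

theorem add_mul_sub_crossing_eq {m : ℝ} (hm : m ≠ 2) (d r : ℝ) :
    r * (d - m) / (2 - m) + m * (r - r * (d - m) / (2 - m)) = d * r - r * (d - m) / (2 - m) := by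
  have : 2 - m ≠ 0 := sub_ne_zero.2 (Ne.symm hm)
  field_simp
  ring

theorem crossing_mem_Icc {d m r : ℝ} (hmd : m ≤ d) (hd : d ≤ 2) (hm : m < 2) (hr : 0 ≤ r) :
    r * (d - m) / (2 - m) ∈ Set.Icc 0 r := by
  have h2m : 0 < 2 - m := sub_pos.2 hm
  refine ⟨div_nonneg (mul_nonneg hr (sub_nonneg.2 hmd)) h2m.le, ?_⟩
  rw [div_le_iff₀ h2m]
  nlinarith

theorem sub_crossing_eq_closed_form {d D r m : ℝ} (hP : D ^ 2 + D - D * d - 1 ≠ 0) (hm2 : m ≠ 2)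
    (hm : m = d * (2 * D - d - 1) / (D ^ 2 + D - D * d - 1)) :
    d * r - r * (d - m) / (2 - m)
      = d * r * (1 - (D - 1) * (D - d) / (2 * D ^ 2 + (2 - 4 * d) * D + d ^ 2 + d - 2)) := by
  have hmP : m * (D ^ 2 + D - D * d - 1) = d * (2 * D - d - 1) := by
    rw [hm, div_mul_cancel₀ _ hP]
  have hQ : 2 * D ^ 2 + (2 - 4 * d) * D + d ^ 2 + d - 2 = (D ^ 2 + D - D * d - 1) * (2 - m) := by
    linear_combination hmP
  have h2m : 2 - m ≠ 0 := sub_ne_zero.2 (Ne.symm hm2)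
  rw [hQ]
  generalize hPdef : D ^ 2 + D - D * d - 1 = P at hP hmP ⊢
  field_simp
  linear_combination r * hmP + d * r * hPdef

theorem stmt_2_general (d D r m : ℝ) (hd : 1 < d) (hdD : d ≤ D) (hD : D ≤ 2) (hr : 0 < r)
    (hm : m = d * (2 * D - d - 1) / (D ^ 2 + D - D * d - 1))
    (hm1 : m < 1) :
    ∃ L ∈ Set.Icc (0 : ℝ) r,
      L + m * (r - L) = d * r - L ∧
      max (L + m * (r - L)) (d * r - L)
        = d * r * (1 - (D - 1) * (D - d) / (2 * D ^ 2 + (2 - 4 * d) * D + d ^ 2 + d - 2)) ∧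
      IsLeast ((fun L => max (L + m * (r - L)) (d * r - L)) '' Set.Icc (0 : ℝ) r)
        (d * r * (1 - (D - 1) * (D - d) / (2 * D ^ 2 + (2 - 4 * d) * D + d ^ 2 + d - 2))) := by
  have hm2 : m ≠ 2 := by linarith
  have hP : D ^ 2 + D - D * d - 1 ≠ 0 := by nlinarith
  have hL := crossing_mem_Icc (m := m) (by linarith) (hdD.trans hD) (by linarith) hr.le
  have hcross := add_mul_sub_crossing_eq hm2 d r
  have hvalue := hcross.trans (sub_crossing_eq_closed_form (r := r) hP hm2 hm)
  refine ⟨_, hL, hcross, by rw [max_eq_left hcross.ge, hvalue], ?_⟩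
  rw [← hvalue]
  exact isLeast_image_max_of_monotoneOn_of_antitoneOn ((monotone_add_mul_sub hm1.le r).monotoneOn _)
    (fun x _ y _ hxy => by linarith) hL hcross

theorem stmt_2 (d D r m : ℝ) (hd : 1 < d) (hdD : d ≤ D) (hD : D ≤ 2) (hr : 0 < r)
    (hm : m = d * (2 * D - d - 1) / (D ^ 2 + D - D * d - 1))
    (hm0 : 0 ≤ m) (hm1 : m < 1) :
    ∃ L ∈ Set.Icc (0 : ℝ) r,
      L + m * (r - L) = d * r - L ∧
      max (L + m * (r - L)) (d * r - L)
        = d * r * (1 - (D - 1) * (D - d) / (2 * D ^ 2 + (2 - 4 * d) * D + d ^ 2 + d - 2)) ∧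
      IsLeast ((fun L => max (L + m * (r - L)) (d * r - L)) '' Set.Icc (0 : ℝ) r)
        (d * r * (1 - (D - 1) * (D - d) / (2 * D ^ 2 + (2 - 4 * d) * D + d ^ 2 + d - 2))) :=
  stmt_2_general d D r m hd hdD hD hr hm hm1
end

section
/- Let f : ℝ → ℝ be continuous and nondecreasing, let 1 < d ≤ D ≤ 2, and let r > 0. Suppose t ∈ (r/2, r). Then f(t) - f(r) + (d/D)·r - ((d+1-D)/D)·t > 0 whenever f(t) ≥ f(r) - (r - t). In particular, any solution t of f(t) = f(r) + ((D-1)/D)(dr - (d+1)t) - d(r-t) with [t,r] teal for f satisfies t ≤ r/2. -/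
/-!
Write `a = f t - f r`. Tealness of `[t, r]` gives `a ≥ -(r - t)`, and then `D` times the quantity
`a + (d / D) r - ((d + 1 - D) / D) t` is at least `(2D - d - 1)(t - r/2) + (d - 1) r / 2`, which is
positive once `t > r/2`. The equation defining a teal left endpoint says exactly that this
quantity vanishes, so such an endpoint cannot exceed `r / 2`.
-/

lemma teal_defect_pos {d D r t a : ℝ} (hd : 1 < d) (hdD : d ≤ D) (hr : 0 < r)
    (hrt : r / 2 < t) (ha : -(r - t) ≤ a) :
    0 < a + d / D * r - (d + 1 - D) / D * t := by
  have hD : 0 < D := by linarith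
  have hscaled : D * (a + d / D * r - (d + 1 - D) / D * t) = D * a + d * r - (d + 1 - D) * t := by
    field_simp
  have : 0 < D * (a + d / D * r - (d + 1 - D) / D * t) := by
    rw [hscaled]
    nlinarith [mul_pos (by linarith : (0 : ℝ) < 2 * D - d - 1) (by linarith : 0 < t - r / 2)]
  exact pos_of_mul_pos_right this hD.le

lemma teal_defect_eq_zero {d D r t a b : ℝ} (hD : D ≠ 0)
    (h : a = b + (D - 1) / D * (d * r - (d + 1) * t) - d * (r - t)) :
    a - b + d / D * r - (d + 1 - D) / D * t = 0 := by
  rw [h]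
  field_simp
  ring

theorem stmt_7_general (f : ℝ → ℝ)
    (d D r : ℝ) (hd : 1 < d) (hdD : d ≤ D) (hr : 0 < r) :
    (∀ t : ℝ, r / 2 < t → t < r → f t ≥ f r - (r - t) →
      f t - f r + (d / D) * r - ((d + 1 - D) / D) * t > 0) ∧
    (∀ t ∈ Set.Icc (0 : ℝ) r,
      f t = f r + ((D - 1) / D) * (d * r - (d + 1) * t) - d * (r - t) →
      (∀ c ∈ Set.Icc t r, f r - f c ≤ r - c) →
      t ≤ r / 2) := by
  refine ⟨fun t hrt _ hft => teal_defect_pos hd hdD hr hrt (by linarith), ?_⟩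
  intro t ht heq hteal
  by_contra! hrt
  have hft : f r - f t ≤ r - t := hteal t ⟨le_rfl, ht.2⟩
  have hpos := teal_defect_pos hd hdD hr hrt (a := f t - f r) (by linarith)
  rw [teal_defect_eq_zero (by linarith) heq] at hpos
  exact hpos.false

theorem stmt_7 (f : ℝ → ℝ) (hcont : Continuous f) (hmono : Monotone f)
    (d D r : ℝ) (hd : 1 < d) (hdD : d ≤ D) (hD : D ≤ 2) (hr : 0 < r) :
    (∀ t : ℝ, r / 2 < t → t < r → f t ≥ f r - (r - t) →
      f t - f r + (d / D) * r - ((d + 1 - D) / D) * t > 0) ∧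
    (∀ t ∈ Set.Icc (0 : ℝ) r,
      f t = f r + ((D - 1) / D) * (d * r - (d + 1) * t) - d * (r - t) →
      (∀ c ∈ Set.Icc t r, f r - f c ≤ r - c) →
      t ≤ r / 2) :=
  stmt_7_general f d D r hd hdD hr
end

section
/- Let f : ℝ → ℝ be continuous and nondecreasing, let a < b, and suppose f(b) - f(a) > b - a. Define t* to be the supremum of all s ∈ [a, b] with f(s) = f(a) + (s - a). Then t* < b, f(t*) = f(a) + (t* - a), and the interval [t*, b] is yellow for f, i.e., f(c) - f(t*) ≥ c - t* for all c ∈ [t*, b]. -/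
/-!
Let `t*` be the last point of `[a, b]` where the graph of `f` meets the line `s ↦ f a + (s - a)`.
The meeting set is closed and contains `a`, so `t*` is attained, and `t* < b` because the line lies
strictly below `f` at `b`. If the line were strictly above `f` at some `c ∈ [t*, b]`, the
intermediate value theorem would give a meeting point in `[c, b]`; it cannot exceed `t* ≤ c`,
so it is `c` itself, a contradiction. Hence `f - f t* ≥ id - t*` on `[t*, b]`.
-/

open Set

section LastCrossing

variable {f φ : ℝ → ℝ} {a b : ℝ}

theorem isClosed_setOf_mem_Icc_eq (hf : Continuous f) (hφ : Continuous φ) :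
    IsClosed {s | s ∈ Icc a b ∧ f s = φ s} :=
  isClosed_Icc.inter (isClosed_eq hf hφ)

theorem sSup_setOf_mem_Icc_eq_mem (hf : Continuous f) (hφ : Continuous φ) (hab : a ≤ b)
    (ha : f a = φ a) :
    sSup {s | s ∈ Icc a b ∧ f s = φ s} ∈ {s | s ∈ Icc a b ∧ f s = φ s} :=
  (isClosed_setOf_mem_Icc_eq hf hφ).csSup_mem ⟨a, left_mem_Icc.mpr hab, ha⟩
    ⟨b, fun _ hs => hs.1.2⟩

theorem sSup_setOf_mem_Icc_eq_lt (hf : Continuous f) (hφ : Continuous φ) (hab : a ≤ b)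
    (ha : f a = φ a) (hb : f b ≠ φ b) :
    sSup {s | s ∈ Icc a b ∧ f s = φ s} < b := by
  have hmem := sSup_setOf_mem_Icc_eq_mem hf hφ hab ha
  exact hmem.1.2.lt_of_ne fun hlast => hb (hlast ▸ hmem.2)

theorem le_of_mem_Icc_sSup_setOf_mem_Icc_eq (hf : Continuous f) (hφ : Continuous φ)
    (hab : a ≤ b) (ha : f a = φ a) (hb : φ b ≤ f b) {c : ℝ}
    (hc : c ∈ Icc (sSup {s | s ∈ Icc a b ∧ f s = φ s}) b) : φ c ≤ f c := by
  by_contra! hlt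
  have hbdd : BddAbove {s | s ∈ Icc a b ∧ f s = φ s} := ⟨b, fun _ hs => hs.1.2⟩
  have hac : a ≤ c := (le_csSup hbdd ⟨left_mem_Icc.mpr hab, ha⟩).trans hc.1
  obtain ⟨d, hd, hfd⟩ : ∃ d ∈ Icc c b, f d - φ d = 0 :=
    intermediate_value_Icc hc.2 (hf.sub hφ).continuousOn
      ⟨(sub_neg.mpr hlt).le, sub_nonneg.mpr hb⟩
  have hdc : d ≤ c :=
    (le_csSup hbdd ⟨⟨hac.trans hd.1, hd.2⟩, sub_eq_zero.mp hfd⟩).trans hc.1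
  obtain rfl := le_antisymm hdc hd.1
  exact hlt.ne (sub_eq_zero.mp hfd)

end LastCrossing

theorem stmt_9_general (f : ℝ → ℝ) (hcont : Continuous f)
    (a b : ℝ) (hab : a < b) (h : f b - f a > b - a) :
    sSup {s | s ∈ Set.Icc a b ∧ f s = f a + (s - a)} < b ∧
    f (sSup {s | s ∈ Set.Icc a b ∧ f s = f a + (s - a)})
      = f a + (sSup {s | s ∈ Set.Icc a b ∧ f s = f a + (s - a)} - a) ∧
    ∀ c ∈ Set.Icc (sSup {s | s ∈ Set.Icc a b ∧ f s = f a + (s - a)}) b,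
      f c - f (sSup {s | s ∈ Set.Icc a b ∧ f s = f a + (s - a)})
        ≥ c - sSup {s | s ∈ Set.Icc a b ∧ f s = f a + (s - a)} := by
  have hline : Continuous fun s : ℝ => f a + (s - a) := by fun_prop
  have hstart : f a = f a + (a - a) := by ring
  have hmem := sSup_setOf_mem_Icc_eq_mem hcont hline hab.le hstart
  have hend : f a + (b - a) < f b := by linarith
  refine ⟨sSup_setOf_mem_Icc_eq_lt hcont hline hab.le hstart hend.ne', hmem.2, fun c hc => ?_⟩
  linarith [le_of_mem_Icc_sSup_setOf_mem_Icc_eq hcont hline hab.le hstart hend.le hc, hmem.2]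

theorem stmt_9 (f : ℝ → ℝ) (hcont : Continuous f) (hmono : Monotone f)
    (a b : ℝ) (hab : a < b) (h : f b - f a > b - a) :
    sSup {s | s ∈ Set.Icc a b ∧ f s = f a + (s - a)} < b ∧
    f (sSup {s | s ∈ Set.Icc a b ∧ f s = f a + (s - a)})
      = f a + (sSup {s | s ∈ Set.Icc a b ∧ f s = f a + (s - a)} - a) ∧
    ∀ c ∈ Set.Icc (sSup {s | s ∈ Set.Icc a b ∧ f s = f a + (s - a)}) b,
      f c - f (sSup {s | s ∈ Set.Icc a b ∧ f s = f a + (s - a)})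
        ≥ c - sSup {s | s ∈ Set.Icc a b ∧ f s = f a + (s - a)} :=
  stmt_9_general f hcont a b hab h
end
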